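/- arXiv:2401.03651 — 2 statements merged into one kernel-verified Lean document; each statement's English description precedes it below -/
import Mathlib

section
/- If v^{k+1} = v^k - M(v^k - ṽ^k), H = QM^{-1} is symmetric, and G = Q^T + Q - M^T H M, then for all v: (v - ṽ^k)^T Q (v^k - ṽ^k) = (1/2)(||v - v^{k+1}||_H^2 - ||v - v^k||_H^2) + (1/2)||v^k - ṽ^k||_G^2. -/
/-!
Write `w = vᵏ - ṽᵏ` and `a = v - vᵏ`, so that `v - ṽᵏ = a + w` and `v - vᵏ⁺¹ = a + M w`.
Since `Q = H M`, the left side is `(a + w)ᵀ H M w`. Expanding `‖a + M w‖²_H` with `H` symmetric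
gives `aᵀ H M w + ½ ‖M w‖²_H` for the first half of the right side, and
`½ wᵀ G w = wᵀ H M w - ½ ‖M w‖²_H`; the two `‖M w‖²_H` terms cancel.
-/

open Matrix

namespace Matrix

variable {n R : Type*} [Fintype n] [CommSemiring R]

theorem IsSymm.dotProduct_mulVec_comm {H : Matrix n n R} (hH : H.IsSymm) (x y : n → R) :
    x ⬝ᵥ H *ᵥ y = y ⬝ᵥ H *ᵥ x := by
  conv_lhs => rw [← hH.eq]
  exact dotProduct_transpose_mulVec H x y

theorem IsSymm.dotProduct_mulVec_add_self {H : Matrix n n R} (hH : H.IsSymm) (x y : n → R) :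
    (x + y) ⬝ᵥ H *ᵥ (x + y) = x ⬝ᵥ H *ᵥ x + 2 * (x ⬝ᵥ H *ᵥ y) + y ⬝ᵥ H *ᵥ y := by
  simp only [mulVec_add, add_dotProduct, dotProduct_add, hH.dotProduct_mulVec_comm y x]
  ring

theorem dotProduct_transpose_mul_mul_mulVec_self (M H : Matrix n n R) (x : n → R) :
    x ⬝ᵥ (Mᵀ * H * M) *ᵥ x = (M *ᵥ x) ⬝ᵥ H *ᵥ (M *ᵥ x) := by
  rw [← mulVec_mulVec, ← mulVec_mulVec, dotProduct_transpose_mulVec, dotProduct_comm]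

end Matrix

theorem stmt_4 {N : ℕ} (M Q H G : Matrix (Fin N) (Fin N) ℝ)
    (hMinv : IsUnit M.det)
    (hH : H = Q * M⁻¹) (hHsymm : H.IsSymm)
    (hG : G = Qᵀ + Q - Mᵀ * H * M)
    (vk vt : Fin N → ℝ) (vk1 : Fin N → ℝ)
    (hv : vk1 = vk - M.mulVec (vk - vt)) :
    ∀ v : Fin N → ℝ,
      (v - vt) ⬝ᵥ Q.mulVec (vk - vt) =
        (1/2) * ((v - vk1) ⬝ᵥ H.mulVec (v - vk1) - (v - vk) ⬝ᵥ H.mulVec (v - vk)) +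
        (1/2) * ((vk - vt) ⬝ᵥ G.mulVec (vk - vt)) := by
  intro v
  have hQ : Q = H * M := by rw [hH, nonsing_inv_mul_cancel_right _ _ hMinv]
  set w := vk - vt
  set a := v - vk with ha
  have hvt : v - vt = a + w := (sub_add_sub_cancel v vk vt).symm
  have hvk1 : v - vk1 = a + M *ᵥ w := by rw [hv, ha]; abel
  have hGw : w ⬝ᵥ G *ᵥ w = 2 * (w ⬝ᵥ Q *ᵥ w) - (M *ᵥ w) ⬝ᵥ H *ᵥ (M *ᵥ w) := by
    rw [hG, sub_mulVec, add_mulVec, dotProduct_sub, dotProduct_add,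
      dotProduct_transpose_mulVec, dotProduct_transpose_mul_mul_mulVec_self]
    ring
  rw [hvt, hvk1, hGw, hHsymm.dotProduct_mulVec_add_self, hQ, ← mulVec_mulVec, add_dotProduct]
  ring
end

section
/- For γ ∈ (1,2), if (λ - λ̂)^T B(y - ỹ) ≥ 0 where λ̂ := λ - β(Ax̃ + Bỹ - b), then the quadratic form ||(y-ỹ, λ-λ̃)||_G² with λ̃ := λ - β(Ax̃ + By - b) satisfies ||(y-ỹ, λ-λ̃)||_G² ≥ ((2-γ)/γ²)β||B(y - y⁺)||² + ((2-γ)/(γ²β))||λ - λ⁺||², where y⁺ := y - γ(y-ỹ) and λ⁺ := λ - γ(λ-λ̂). -/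
open Matrix

/-! With `p := A x̃ + B ỹ - b` and `v := B (y - ỹ)` we have `λ - λ̂ = β p`, `λ - λ̃ = β (p + v)`,
`y - y⁺ = γ (y - ỹ)` and `λ - λ⁺ = γ β p`. Expanding both sides in `vᵀv`, `pᵀv`, `pᵀp`, the
`G`-form exceeds the left-hand side by exactly `2 β pᵀv = 2 (λ - λ̂)ᵀ B (y - ỹ) ≥ 0`. -/

theorem sumElim_dotProduct_fromBlocks_mulVec_sumElim {R ι κ : Type*} [CommRing R] [Fintype ι]
    [Fintype κ] [DecidableEq κ] (B : Matrix κ ι R) (a c d : R) (u : ι → R) (w : κ → R) :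
    Sum.elim u w ⬝ᵥ fromBlocks (a • (Bᵀ * B)) (c • Bᵀ) (c • B) (d • 1) *ᵥ Sum.elim u w =
      a * (B *ᵥ u ⬝ᵥ B *ᵥ u) + 2 * c * (B *ᵥ u ⬝ᵥ w) + d * (w ⬝ᵥ w) := by
  have htranspose (w : κ → R) : u ⬝ᵥ Bᵀ *ᵥ w = B *ᵥ u ⬝ᵥ w := by
    rw [dotProduct_mulVec, vecMul_transpose]
  have hgram : u ⬝ᵥ (Bᵀ * B) *ᵥ u = B *ᵥ u ⬝ᵥ B *ᵥ u := by
    rw [← mulVec_mulVec, htranspose]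
  simp only [fromBlocks_mulVec, sumElim_dotProduct_sumElim, smul_mulVec, dotProduct_add,
    dotProduct_smul, one_mulVec, smul_eq_mul, Sum.elim_comp_inl, Sum.elim_comp_inr, htranspose,
    hgram]
  rw [dotProduct_comm w]
  ring

theorem stmt_9 {m n₁ n₂ : ℕ} (A : Matrix (Fin m) (Fin n₁) ℝ)
    (B : Matrix (Fin m) (Fin n₂) ℝ) (b : Fin m → ℝ) (β γ : ℝ) (hβ : 0 < β)
    (hγ : γ ∈ Set.Ioo (1 : ℝ) 2)
    (xt : Fin n₁ → ℝ) (y yt : Fin n₂ → ℝ) (lam : Fin m → ℝ)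
    (lamhat lamtil : Fin m → ℝ)
    (hhat : lamhat = lam - β • (A.mulVec xt + B.mulVec yt - b))
    (htil : lamtil = lam - β • (A.mulVec xt + B.mulVec y - b))
    (hcrit : 0 ≤ (lam - lamhat) ⬝ᵥ (B.mulVec (y - yt)))
    (G : Matrix (Fin n₂ ⊕ Fin m) (Fin n₂ ⊕ Fin m) ℝ)
    (hG : G = Matrix.fromBlocks (((2 - 2 * γ) * β) • (Bᵀ * B)) ((γ - 1) • Bᵀ)
      ((γ - 1) • B) (((2 - γ) / β) • 1))
    (yplus : Fin n₂ → ℝ) (hyplus : yplus = y - γ • (y - yt))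
    (lamplus : Fin m → ℝ) (hlamplus : lamplus = lam - γ • (lam - lamhat)) :
    ((2 - γ) / γ ^ 2) * β * ((B.mulVec (y - yplus)) ⬝ᵥ (B.mulVec (y - yplus))) +
      ((2 - γ) / (γ ^ 2 * β)) * ((lam - lamplus) ⬝ᵥ (lam - lamplus)) ≤
    (Sum.elim (y - yt) (lam - lamtil)) ⬝ᵥ G.mulVec (Sum.elim (y - yt) (lam - lamtil)) := by
  obtain ⟨hγ₁, -⟩ := hγ
  subst hhat htil hG hyplus hlamplus
  set p := A *ᵥ xt + B *ᵥ yt - b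
  have hres : A *ᵥ xt + B *ᵥ y - b = p + B *ᵥ (y - yt) := by
    simp only [p, mulVec_sub]; abel
  simp only [sub_sub_cancel, hres, mulVec_smul, sumElim_dotProduct_fromBlocks_mulVec_sumElim,
    smul_dotProduct, dotProduct_smul, dotProduct_add, add_dotProduct, smul_eq_mul] at hcrit ⊢
  generalize B *ᵥ (y - yt) = v at hcrit ⊢
  have hβ₀ : β ≠ 0 := hβ.ne'
  have hγ₀ : γ ≠ 0 := (zero_lt_one.trans hγ₁).ne'
  rw [dotProduct_comm v p, ← sub_nonneg]
  refine (mul_nonneg zero_le_two hcrit).trans_eq ?_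
  field_simp
  ring
end
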